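/- arXiv:1708.03780 — 4 statements merged into one kernel-verified Lean document; each statement's English description precedes it below -/
import Mathlib

section
/- Let F be a piecewise translation of m = d+1 branches in ℝ^d whose translation vectors have rank d, and assume the torus rotation R : T → T, R(φ) = φ + π(v_0), is ergodic with respect to Haar measure on T. Define ξ(φ) = card(π^{-1}(φ) ∩ A) for φ ∈ T, where A is the attractor of F. Then ξ is constant for Haar-almost every φ ∈ T. -/
open MeasureTheory Topology Filter Set

/-- A piecewise translation map (PWT) of `m` branches in `ℝ^d`: a region `Ω`
partitioned into regions `P 0, …, P (m-1)` with null boundaries and pairwise disjoint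
interiors, together with translation vectors `v i` such that `P i + v i ⊆ Ω`, and a fixed
measurable resolution `idx` of the ambiguity on overlapping boundaries. -/
structure PWT (d m : ℕ) where
  Om : Set (Fin d → ℝ)
  P : Fin m → Set (Fin d → ℝ)
  v : Fin m → (Fin d → ℝ)
  idx : (Fin d → ℝ) → Fin m
  compact_Om : IsCompact Om
  region_Om : Om = closure (interior Om)
  compact_P : ∀ i, IsCompact (P i)
  region_P : ∀ i, P i = closure (interior (P i))
  union_P : Om = ⋃ i, P i
  disj_P : ∀ i j, i ≠ j → interior (P i) ∩ interior (P j) = ∅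
  null_bd_P : ∀ i, volume (frontier (P i)) = 0
  translate_mem : ∀ i, ∀ x ∈ P i, x + v i ∈ Om
  idx_mem : ∀ x ∈ Om, x ∈ P (idx x)
  idx_meas : Measurable idx

namespace PWT

variable {d m : ℕ}

/-- The piecewise translation map `F(x) = x + v_{i(x)}`. -/
def F (T : PWT d m) (x : Fin d → ℝ) : Fin d → ℝ := x + T.v (T.idx x)

/-- `Ω_0 = Ω`, `Ω_{n+1} = closure (F(Ω_n))`. -/
def OmSeq (T : PWT d m) : ℕ → Set (Fin d → ℝ)
  | 0 => T.Om
  | n + 1 => closure (T.F '' T.OmSeq n)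

/-- The attractor `A = ⋂ₙ Ω_n`. -/
def attractor (T : PWT d m) : Set (Fin d → ℝ) := ⋂ n, T.OmSeq n

/-- The fate map `𝓕(x) = (i(x), i(F x), i(F² x), …)`. -/
def fate (T : PWT d m) (x : Fin d → ℝ) : ℕ → Fin m := fun n => T.idx (T.F^[n] x)

/-- The matrix whose columns are the lattice generators `v_1 - v_0, …, v_d - v_0`. -/
noncomputable def latMatrix (T : PWT d (d + 1)) : Matrix (Fin d) (Fin d) ℝ :=
  Matrix.of fun i j => (T.v j.succ - T.v 0) i

/-- The canonical projection `π : ℝ^d → T = ℝ^d/L ≅ (ℝ/ℤ)^d`, expressed in the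
coordinates given by the lattice basis `v_1 - v_0, …, v_d - v_0` of `L`. -/
noncomputable def torusProj (T : PWT d (d + 1)) (x : Fin d → ℝ) : Fin d → AddCircle (1 : ℝ) :=
  fun i => ((T.latMatrix⁻¹.mulVec x) i : AddCircle (1 : ℝ))

end PWT

/-!
The projection `π` semiconjugates `F` to the rotation `R`, since all the `v i` have the same
image in `T`, and every point of the attractor has an `F`-preimage in the attractor. Off the
null set `π (⋃ i, ∂P i)` the branch of such a preimage is forced, so `F` maps the fibre of `A`
over `φ` onto the fibre over `R φ`, and `ξ ∘ R ≤ ξ` almost everywhere. A measure-preserving map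
of a finite measure cannot decrease an integer-valued function on a set of positive measure,
so `ξ ∘ R = ξ` a.e. and ergodicity makes `ξ` a.e. constant. Measurability of `ξ` comes from
upper semicontinuity: `π` is a local homeomorphism and `A` is compact.
-/

section LocallyInjective

variable {X Y : Type*} [TopologicalSpace X] [TopologicalSpace Y]

theorem IsLocallyInjective.comp_injective {Z : Type*} {g : Y → Z} {f : X → Y}
    (hg : IsLocallyInjective g) (hf : Continuous f) (hf_inj : f.Injective) :
    IsLocallyInjective (g ∘ f) := by
  intro x
  obtain ⟨U, hU, hxU, hinj⟩ := hg (f x)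
  exact ⟨f ⁻¹' U, hU.preimage hf, hxU, fun a ha b hb hab => hf_inj (hinj ha hb hab)⟩

theorem IsLocallyInjective.piMap {ι : Type*} [Finite ι] {X Y : ι → Type*}
    [∀ i, TopologicalSpace (X i)] {f : ∀ i, X i → Y i} (hf : ∀ i, IsLocallyInjective (f i)) :
    IsLocallyInjective (Pi.map f) := by
  intro x
  choose U hU hxU hinj using fun i => hf i (x i)
  refine ⟨univ.pi U, isOpen_set_pi finite_univ fun i _ => hU i, fun i _ => hxU i, ?_⟩
  intro a ha b hb hab
  funext i
  exact hinj i (ha i trivial) (hb i trivial) (congrFun hab i)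

variable {π : X → Y} {A : Set X}

theorem IsLocallyInjective.finite_preimage_inter [T1Space Y] (hπ : IsLocallyInjective π)
    (hcont : Continuous π) (hA : IsCompact A) (y : Y) : (π ⁻¹' {y} ∩ A).Finite := by
  choose U hU hxU hinj using hπ
  obtain ⟨t, hts, hcover⟩ := (hA.inter_left (isClosed_singleton.preimage hcont)).elim_nhds_subcover
    U fun x _ => (hU x).mem_nhds (hxU x)
  refine t.finite_toSet.subset fun z hz => ?_
  obtain ⟨x, hxt, hzx⟩ := mem_iUnion₂.1 (hcover hz)
  rwa [hinj x hzx (hxU x) ((hz.1 : π z = y).trans (hts x hxt).1.symm)]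

/-- The number of points of `A` over `y` can only drop near `y`: each of them has a neighbourhood
on which `π` is injective, and `π` of the rest of `A` is a compact set missing `y`. -/
theorem IsLocallyInjective.upperSemicontinuous_ncard_preimage_inter [T2Space Y]
    (hπ : IsLocallyInjective π) (hcont : Continuous π) (hA : IsCompact A) :
    UpperSemicontinuous fun y => (π ⁻¹' {y} ∩ A).ncard := by
  intro y₀ k hk
  set K := π ⁻¹' {y₀} ∩ A
  have hK : K.Finite := hπ.finite_preimage_inter hcont hA y₀
  choose U hU hxU hinj using hπ
  set V := ⋃ x ∈ K, U x
  have hy₀ : y₀ ∉ π '' (A \ V) := by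
    rintro ⟨z, hz, rfl⟩
    exact hz.2 (mem_biUnion ⟨rfl, hz.1⟩ (hxU z))
  filter_upwards [((hA.diff (isOpen_biUnion fun x _ => hU x)).image hcont).isClosed.isOpen_compl
    |>.mem_nhds hy₀] with y hy
  have hsel : ∀ z ∈ π ⁻¹' {y} ∩ A, ∃ x ∈ K, z ∈ U x := fun z hz => by
    simpa [V] using not_not.1 fun hzV => hy ⟨z, ⟨hz.2, hzV⟩, hz.1⟩
  choose! j hjK hzj using hsel
  refine lt_of_le_of_lt (Set.ncard_le_ncard_of_injOn j hjK (fun a ha b hb hab =>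
    hinj (j a) (hzj a ha) (hab ▸ hzj b hb) (ha.1.trans hb.1.symm)) hK) hk

end LocallyInjective

theorem MeasureTheory.MeasurePreserving.comp_ae_eq_of_comp_ae_le {α : Type*} [MeasurableSpace α]
    {μ : Measure α} [IsFiniteMeasure μ] {f : α → α} (hf : MeasurePreserving f μ μ) {g : α → ℕ}
    (hg : Measurable g) (hle : g ∘ f ≤ᵐ[μ] g) : g ∘ f =ᵐ[μ] g := by
  have hlevel : ∀ k : ℕ, ∀ᵐ x ∂μ, (k ≤ g (f x) ↔ k ≤ g x) := by
    intro k
    have hs : MeasurableSet {x | k ≤ g x} := hg measurableSet_Ici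
    have hsub : f ⁻¹' {x | k ≤ g x} ≤ᵐ[μ] {x | k ≤ g x} :=
      hle.mono fun x hx (hk : k ≤ g (f x)) => hk.trans hx
    exact (ae_eq_of_ae_subset_of_measure_ge hsub (hf.measure_preimage hs.nullMeasurableSet).ge
      (hs.preimage hf.measurable).nullMeasurableSet (measure_ne_top μ _)).mono
      fun x hx => Iff.of_eq hx
  filter_upwards [ae_all_iff.2 hlevel] with x hx
  exact le_antisymm ((hx _).1 le_rfl) ((hx _).2 le_rfl)

section UnitAddTorus

theorem UnitAddCircle.coe_eq_coe_iff {x y : ℝ} :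
    (x : UnitAddCircle) = y ↔ ∃ n : ℤ, x + n = y := by
  rw [eq_comm, ← sub_eq_zero, ← AddCircle.coe_sub, AddCircle.coe_eq_zero_iff]
  simp only [zsmul_eq_mul, mul_one]
  exact exists_congr fun n => by constructor <;> intro h <;> linarith

variable {ι : Type*} [Fintype ι]

theorem UnitAddTorus.volume_image_coe_eq_zero {s : Set (ι → ℝ)} (hs : volume s = 0)
    (hs' : IsCompact s) : volume ((fun x i => (x i : UnitAddCircle)) '' s) = 0 := by
  set q : (ι → ℝ) → UnitAddTorus ι := fun x i => x i
  have hq : MeasurePreserving q (volume.restrict (univ.pi fun _ => Ioc 0 (0 + 1))) volume := by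
    rw [volume_pi, Measure.restrict_pi_pi]
    exact measurePreserving_pi _ _ fun _ => AddCircle.measurePreserving_mk 1 0
  have hpre : q ⁻¹' (q '' s) ⊆ ⋃ n : ι → ℤ, (· + fun i => (n i : ℝ)) ⁻¹' s := by
    rintro x ⟨y, hy, hyx⟩
    choose n hn using fun i => UnitAddCircle.coe_eq_coe_iff.1 (congrFun hyx i).symm
    exact mem_iUnion.2 ⟨n, by rwa [mem_preimage, show (x + fun i => (n i : ℝ)) = y from funext hn]⟩
  have hq_cont : Continuous q := continuous_pi fun i => (AddCircle.continuous_mk' 1).comp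
    (continuous_apply i)
  rw [← hq.measure_preimage (hs'.image hq_cont).isClosed.measurableSet.nullMeasurableSet]
  refine Measure.absolutelyContinuous_of_le Measure.restrict_le_self ?_
  refine measure_mono_null hpre (measure_iUnion_null fun n => ?_)
  rwa [measure_preimage_add_right]

end UnitAddTorus

namespace PWT

section Attractor

variable {d m : ℕ} (T : PWT d m)

theorem isClosed_OmSeq : ∀ n, IsClosed (T.OmSeq n)
  | 0 => T.compact_Om.isClosed
  | _ + 1 => isClosed_closure

theorem F_mem_Om {x : Fin d → ℝ} (hx : x ∈ T.Om) : T.F x ∈ T.Om :=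
  T.translate_mem _ x (T.idx_mem x hx)

theorem OmSeq_antitone : Antitone T.OmSeq := by
  refine antitone_nat_of_succ_le fun n => ?_
  induction n with
  | zero => exact closure_minimal (image_subset_iff.2 fun x => T.F_mem_Om) T.compact_Om.isClosed
  | succ n ih => exact closure_mono (image_mono ih)

theorem attractor_subset_Om : T.attractor ⊆ T.Om :=
  iInter_subset _ 0

theorem isCompact_attractor : IsCompact T.attractor :=
  T.compact_Om.of_isClosed_subset (isClosed_iInter T.isClosed_OmSeq) T.attractor_subset_Om

theorem OmSeq_succ_subset (n : ℕ) :
    T.OmSeq (n + 1) ⊆ ⋃ i, (· - T.v i) ⁻¹' (T.OmSeq n ∩ T.P i) := by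
  refine closure_minimal ?_ (isClosed_iUnion_of_finite fun i =>
    ((T.isClosed_OmSeq n).inter (T.compact_P i).isClosed).preimage (continuous_sub_right _))
  rintro _ ⟨x, hx, rfl⟩
  exact mem_iUnion.2 ⟨T.idx x, by
    simpa [F] using ⟨hx, T.idx_mem x (T.OmSeq_antitone (Nat.zero_le n) hx)⟩⟩

/-- Since the `Ω_n` decrease, one branch `i` serves for all of them at once. -/
theorem exists_sub_mem_attractor_inter {y : Fin d → ℝ} (hy : y ∈ T.attractor) :
    ∃ i, y - T.v i ∈ T.attractor ∩ T.P i := by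
  have hmem : y ∈ ⋂ n, ⋃ i, (· - T.v i) ⁻¹' (T.OmSeq n ∩ T.P i) :=
    mem_iInter.2 fun n => T.OmSeq_succ_subset n (mem_iInter.1 hy (n + 1))
  obtain ⟨i, hi⟩ := mem_iUnion.1 <| (iInter_iUnion_of_antitone
    (s := fun i n => (· - T.v i) ⁻¹' (T.OmSeq n ∩ T.P i)) fun i _ _ hab =>
      preimage_mono (inter_subset_inter_left _ (T.OmSeq_antitone hab))).subset hmem
  exact ⟨i, mem_iInter.2 fun n => (mem_iInter.1 hi n).1, (mem_iInter.1 hi 0).2⟩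

theorem idx_eq_of_mem {x : Fin d → ℝ} {i : Fin m} (hxi : x ∈ T.P i)
    (hx : ∀ j, x ∉ frontier (T.P j)) : T.idx x = i := by
  have hint : ∀ j, x ∈ T.P j → x ∈ interior (T.P j) := fun j hj =>
    (self_sdiff_frontier (T.P j)).subset ⟨hj, hx j⟩
  by_contra hne
  have hx' := T.union_P ▸ mem_iUnion.2 ⟨i, hxi⟩
  exact (T.disj_P _ _ hne).subset ⟨hint _ (T.idx_mem x hx'), hint i hxi⟩

end Attractor

section Torus

variable {d : ℕ} (T : PWT d (d + 1))

theorem torusProj_eq_comp :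
    T.torusProj = Pi.map (fun _ => ((↑) : ℝ → UnitAddCircle)) ∘ T.latMatrix⁻¹.mulVec :=
  rfl

theorem continuous_torusProj : Continuous T.torusProj :=
  continuous_pi fun i => (AddCircle.continuous_mk' 1).comp
    ((continuous_apply i).comp (Matrix.mulVecLin T.latMatrix⁻¹).continuous_of_finiteDimensional)

theorem torusProj_add (x y : Fin d → ℝ) :
    T.torusProj (x + y) = T.torusProj x + T.torusProj y := by
  funext i
  simp [torusProj, Matrix.mulVec_add]

theorem torusProj_sub (x y : Fin d → ℝ) :
    T.torusProj (x - y) = T.torusProj x - T.torusProj y := by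
  rw [eq_sub_iff_add_eq, ← torusProj_add, sub_add_cancel]

theorem torusProj_v (hM : IsUnit T.latMatrix) (i : Fin (d + 1)) :
    T.torusProj (T.v i) = T.torusProj (T.v 0) := by
  induction i using Fin.cases with
  | zero => rfl
  | succ j =>
    have hcol : T.v j.succ - T.v 0 = T.latMatrix.mulVec (Pi.single j 1) := by
      funext k
      simp [latMatrix]
    rw [← sub_eq_zero, ← torusProj_sub, hcol]
    funext k
    simp only [torusProj, Matrix.mulVec_mulVec,
      Matrix.nonsing_inv_mul _ ((Matrix.isUnit_iff_isUnit_det _).1 hM), Matrix.one_mulVec,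
      Pi.single_apply, Pi.zero_apply]
    split_ifs <;> simp

theorem isLocallyInjective_torusProj (hM : IsUnit T.latMatrix) :
    IsLocallyInjective T.torusProj := by
  rw [torusProj_eq_comp]
  exact (IsLocallyInjective.piMap fun _ =>
    (AddCircle.isLocalHomeomorph_coe 1).isLocallyInjective).comp_injective
      ((Matrix.mulVecLin T.latMatrix⁻¹).continuous_of_finiteDimensional)
      (Matrix.mulVec_injective_iff_isUnit.2 (Matrix.isUnit_nonsing_inv_iff.2 hM))

theorem volume_torusProj_image_eq_zero {s : Set (Fin d → ℝ)} (hs : volume s = 0)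
    (hs' : IsCompact s) : volume (T.torusProj '' s) = 0 := by
  have hlin := (Matrix.mulVecLin T.latMatrix⁻¹).continuous_of_finiteDimensional
  rw [torusProj_eq_comp, image_comp]
  refine UnitAddTorus.volume_image_coe_eq_zero ?_ (hs'.image hlin)
  rw [← Matrix.coe_mulVecLin, Measure.addHaar_image_linearMap, hs, mul_zero]

theorem ncard_fiber_add_le (hM : IsUnit T.latMatrix) {φ : Fin d → AddCircle (1 : ℝ)}
    (hφ : φ ∉ T.torusProj '' ⋃ i, frontier (T.P i)) :
    (T.torusProj ⁻¹' {φ + T.torusProj (T.v 0)} ∩ T.attractor).ncard ≤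
      (T.torusProj ⁻¹' {φ} ∩ T.attractor).ncard := by
  have hfin := (T.isLocallyInjective_torusProj hM).finite_preimage_inter T.continuous_torusProj
    T.isCompact_attractor φ
  have hsub : T.torusProj ⁻¹' {φ + T.torusProj (T.v 0)} ∩ T.attractor ⊆
      T.F '' (T.torusProj ⁻¹' {φ} ∩ T.attractor) := by
    rintro y ⟨hyφ, hyA⟩
    obtain ⟨i, hxA, hxP⟩ := T.exists_sub_mem_attractor_inter hyA
    have hxφ : T.torusProj (y - T.v i) = φ := by
      rw [torusProj_sub, mem_singleton_iff.1 hyφ, T.torusProj_v hM i, add_sub_cancel_right]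
    have hidx : T.idx (y - T.v i) = i :=
      T.idx_eq_of_mem hxP fun j hj => hφ ⟨_, mem_iUnion.2 ⟨j, hj⟩, hxφ⟩
    exact ⟨y - T.v i, ⟨hxφ, hxA⟩, by rw [F, hidx, sub_add_cancel]⟩
  exact (ncard_le_ncard hsub (hfin.image _)).trans (ncard_image_le hfin)

end Torus

end PWT

/-- If the torus rotation factor `R(φ) = φ + π(v_0)` is ergodic, then the
fiber-counting function `ξ(φ) = card(π⁻¹(φ) ∩ A)` is constant for Haar-almost every
`φ` in the torus. -/
theorem pwt_fiber_card_ae_const {d : ℕ} (T : PWT d (d + 1))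
    (hrank : LinearIndependent ℝ (fun i : Fin d => T.v i.succ - T.v 0))
    (herg : Ergodic (fun φ : Fin d → AddCircle (1 : ℝ) => φ + T.torusProj (T.v 0)) volume) :
    ∃ c : ℕ, ∀ᵐ φ ∂(volume : Measure (Fin d → AddCircle (1 : ℝ))),
      (T.torusProj ⁻¹' {φ} ∩ T.attractor).ncard = c := by
  have hM : IsUnit T.latMatrix := Matrix.linearIndependent_cols_iff_isUnit.1 hrank
  have hξ : Measurable fun φ => (T.torusProj ⁻¹' {φ} ∩ T.attractor).ncard :=
    ((T.isLocallyInjective_torusProj hM).upperSemicontinuous_ncard_preimage_inter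
      T.continuous_torusProj T.isCompact_attractor).measurable
  have hbad : volume (T.torusProj '' ⋃ i, frontier (T.P i)) = 0 :=
    T.volume_torusProj_image_eq_zero (measure_iUnion_null T.null_bd_P) (isCompact_iUnion fun i =>
      (T.compact_P i).of_isClosed_subset isClosed_frontier (T.compact_P i).isClosed.frontier_subset)
  have hle := (measure_eq_zero_iff_ae_notMem.1 hbad).mono fun φ hφ => T.ncard_fiber_add_le hM hφ
  exact herg.ae_eq_const_of_ae_eq_comp₀ hξ.nullMeasurable
    (herg.toMeasurePreserving.comp_ae_eq_of_comp_ae_le hξ hle)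
end

section
/- Let F be a piecewise translation of m = d+1 branches in ℝ^d whose translation vectors v_0, …, v_d have rank d (every d of them form a basis of ℝ^d). Then for every x ∈ Ω and every index i ∈ {0, …, d}, the orbit (F^n(x))_{n≥0} visits the partition element P_i infinitely many times, i.e. {n ∈ ℕ : F^n(x) ∈ P_i} is infinite. -/
open MeasureTheory Topology Filter Set

/-!
If the orbit of `x` eventually stopped visiting `P i`, from then on it would only move by the
translations `v j` with `j ≠ i`. These are linearly independent, so some linear functional `φ`
takes the value `1` on each of them, and `φ` would then grow by `1` at every step along the
orbit. But the orbit stays in the compact set `Ω`, on which `φ` is bounded.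
-/

theorem LinearIndependent.exists_linearMap_apply_eq_one {ι K V : Type*} [Field K]
    [AddCommGroup V] [Module K V] {v : ι → V} (hv : LinearIndependent K v) :
    ∃ φ : V →ₗ[K] K, ∀ i, φ (v i) = 1 := by
  obtain ⟨φ, hφ⟩ :=
    LinearMap.exists_extend (Finsupp.linearCombination K (fun _ => (1 : K)) ∘ₗ hv.repr)
  refine ⟨φ, fun i => ?_⟩
  have := LinearMap.congr_fun hφ ⟨v i, Submodule.subset_span (mem_range_self i)⟩
  simp only [LinearMap.comp_apply, Submodule.subtype_apply] at this
  rw [this, hv.repr_eq_single i _ rfl, Finsupp.linearCombination_single, smul_eq_mul, mul_one]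

namespace PWT

variable {d m : ℕ} (T : PWT d m)

theorem mapsTo_F : MapsTo T.F T.Om T.Om :=
  fun x hx => T.translate_mem _ x (T.idx_mem x hx)

theorem iterate_F_mem_Om {x : Fin d → ℝ} (hx : x ∈ T.Om) (n : ℕ) : T.F^[n] x ∈ T.Om :=
  T.mapsTo_F.iterate n hx

theorem add_le_apply_iterate_F {i : Fin m} {φ : (Fin d → ℝ) →ₗ[ℝ] ℝ}
    (hφ : ∀ j ≠ i, 1 ≤ φ (T.v j)) {y : Fin d → ℝ} {n : ℕ}
    (hy : ∀ k < n, T.idx (T.F^[k] y) ≠ i) : φ y + n ≤ φ (T.F^[n] y) := by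
  induction n with
  | zero => simp
  | succ n ih =>
    have hstep : 1 ≤ φ (T.v (T.idx (T.F^[n] y))) := hφ _ (hy n n.lt_succ_self)
    rw [Function.iterate_succ_apply', F, map_add]
    push_cast
    linarith [ih fun k hk => hy k (hk.trans n.lt_succ_self)]

theorem infinite_setOf_iterate_F_mem_P_of_one_le_apply (i : Fin m)
    {φ : (Fin d → ℝ) →ₗ[ℝ] ℝ} (hφ : ∀ j ≠ i, 1 ≤ φ (T.v j)) {x : Fin d → ℝ}
    (hx : x ∈ T.Om) : {n : ℕ | T.F^[n] x ∈ T.P i}.Infinite := by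
  intro hfin
  obtain ⟨N, hN⟩ := hfin.bddAbove
  obtain ⟨C, hC⟩ := (T.compact_Om.image φ.continuous_of_finiteDimensional).bddAbove
  set y := T.F^[N + 1] x
  have hy : y ∈ T.Om := T.iterate_F_mem_Om hx _
  have hidx : ∀ k, T.idx (T.F^[k] y) ≠ i := by
    intro k hk
    have hvisit : k + (N + 1) ∈ {n : ℕ | T.F^[n] x ∈ T.P i} := by
      rw [mem_ofPred_eq, Function.iterate_add_apply, ← hk]
      exact T.idx_mem _ (T.iterate_F_mem_Om hy k)
    have := hN hvisit
    omega
  obtain ⟨n, hn⟩ := exists_nat_gt (C - φ y)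
  have hbound := hC (mem_image_of_mem φ (T.iterate_F_mem_Om hy n))
  linarith [T.add_le_apply_iterate_F hφ (n := n) fun k _ => hidx k]

end PWT

/-- For a piecewise translation of `m = d+1` branches in `ℝ^d` whose
translation vectors have rank `d` (every `d` of them form a basis of `ℝ^d`), the orbit of
every point `x ∈ Ω` visits every partition element `P i` infinitely many times. -/
theorem pwt_orbit_visits_infinitely {d : ℕ} (T : PWT d (d + 1))
    (hrank : ∀ j : Fin (d + 1),
      LinearIndependent ℝ (fun i : {i : Fin (d + 1) // i ≠ j} => T.v i)) :
    ∀ x ∈ T.Om, ∀ i : Fin (d + 1), {n : ℕ | T.F^[n] x ∈ T.P i}.Infinite := by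
  intro x hx i
  obtain ⟨φ, hφ⟩ := (hrank i).exists_linearMap_apply_eq_one
  exact T.infinite_setOf_iterate_F_mem_P_of_one_le_apply i
    (fun j hj => (hφ ⟨j, hj⟩).ge) hx
end

section
/- Let F be a piecewise translation of m branches in ℝ^d with fate map 𝓕. If some point x ∈ Ω has a periodic fate, i.e. σ^p(𝓕(x)) = 𝓕(x) for some p ≥ 1, then the translation vectors v_0, …, v_{m−1} are rationally dependent: there exist integers n_0, …, n_{m−1}, not all zero, with n_0 v_0 + … + n_{m−1} v_{m−1} = 0. -/
open MeasureTheory Topology Filter Set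

/-- For a piecewise translation of `m` branches in `ℝ^d`, if some point
`x ∈ Ω` has a periodic fate (`σ^p(𝓕(x)) = 𝓕(x)` for some `p ≥ 1`), then the translation
vectors are rationally dependent: some nontrivial integer combination of them vanishes. -/
theorem pwt_periodic_fate_rational_dependence {d m : ℕ} (T : PWT d m)
    (x : Fin d → ℝ) (hx : x ∈ T.Om) (p : ℕ) (hp : 1 ≤ p)
    (hper : ∀ k : ℕ, T.fate x (k + p) = T.fate x k) :
    ∃ n : Fin m → ℤ, n ≠ 0 ∧ ∑ i, n i • T.v i = 0 := by
  classical
  have hF : ∀ y ∈ T.Om, T.F y ∈ T.Om := fun y hy => T.translate_mem _ y (T.idx_mem y hy)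
  have horb : ∀ n, T.F^[n] x ∈ T.Om := by
    intro n; induction n with
    | zero => simpa
    | succ n ih => rw [Function.iterate_succ_apply']; exact hF _ ih
  have hiter : ∀ n, T.F^[n] x = x + ∑ j ∈ Finset.range n, T.v (T.fate x j) := by
    intro n; induction n with
    | zero => simp
    | succ n ih =>
      rw [Function.iterate_succ_apply']
      have h1 : T.F (T.F^[n] x) = T.F^[n] x + T.v (T.fate x n) := rfl
      rw [h1, ih, Finset.sum_range_succ, add_assoc]
  have hperk : ∀ k j, T.fate x (j + k * p) = T.fate x j := by
    intro k; induction k with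
    | zero => simp
    | succ k ih =>
      intro j
      have : j + (k + 1) * p = (j + k * p) + p := by ring
      rw [this, hper, ih]
  set S : Fin d → ℝ := ∑ j ∈ Finset.range p, T.v (T.fate x j) with hS
  have hkS : ∀ k : ℕ, T.F^[k * p] x = x + k • S := by
    intro k; rw [hiter]
    congr 1
    induction k with
    | zero => simp
    | succ k ih =>
      have h1 : (k + 1) * p = k * p + p := by ring
      rw [h1, Finset.sum_range_add, ih, succ_nsmul]
      congr 1
      apply Finset.sum_congr rfl
      intro j _
      rw [show k * p + j = j + k * p by ring, hperk]
  obtain ⟨C, hC⟩ := (Metric.isBounded_iff_subset_closedBall 0).mp T.compact_Om.isBounded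
  have hnorm : ∀ k : ℕ, ‖x + k • S‖ ≤ C := by
    intro k
    have := hC (hkS k ▸ horb (k * p))
    simpa [Metric.mem_closedBall, dist_eq_norm] using this
  have hS0 : S = 0 := by
    by_contra h
    have hSpos : 0 < ‖S‖ := norm_pos_iff.mpr h
    obtain ⟨k, hk⟩ := exists_nat_gt ((C + ‖x‖) / ‖S‖)
    have hk2 : C + ‖x‖ < k * ‖S‖ := (div_lt_iff₀ hSpos).mp hk
    have h4 : ‖(k : ℕ) • S‖ ≤ ‖x + (k : ℕ) • S‖ + ‖x‖ := by
      have h5 := norm_sub_le (x + (k : ℕ) • S) x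
      rwa [add_sub_cancel_left] at h5
    have h3 : (k : ℝ) * ‖S‖ ≤ ‖x + (k : ℕ) • S‖ + ‖x‖ := by
      calc (k : ℝ) * ‖S‖ = ‖(k : ℕ) • S‖ := by
            rw [← Nat.cast_smul_eq_nsmul ℝ, norm_smul, Real.norm_natCast]
        _ ≤ _ := h4
    have := hnorm k
    nlinarith
  refine ⟨fun i => (((Finset.range p).filter (fun j => T.fate x j = i)).card : ℤ), ?_, ?_⟩
  · intro hcontra
    have h0 : (0 : ℕ) ∈ (Finset.range p).filter (fun j => T.fate x j = T.fate x 0) := by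
      simp [Finset.mem_filter, Finset.mem_range, hp]
      omega
    have := congrFun hcontra (T.fate x 0)
    simp only [Pi.zero_apply, Nat.cast_eq_zero, Finset.card_eq_zero] at this
    rw [this] at h0
    exact absurd h0 (Finset.notMem_empty 0)
  · have : ∑ i : Fin m, (((Finset.range p).filter (fun j => T.fate x j = i)).card : ℤ) • T.v i
        = S := by
      rw [hS]
      rw [← Finset.sum_fiberwise (Finset.range p) (fun j => T.fate x j) (fun j => T.v (T.fate x j))]
      apply Finset.sum_congr rfl
      intro i _
      have hall : ∀ j ∈ (Finset.range p).filter (fun j => T.fate x j = i),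
          T.v (T.fate x j) = T.v i := fun j hj => by rw [(Finset.mem_filter.mp hj).2]
      rw [Finset.sum_congr rfl hall, Finset.sum_const, natCast_zsmul]
    rw [this, hS0]
end

section
/- Let T_1(y) = y + α (mod 1) be the rotation of the circle S = ℝ/ℤ and T_2 = T_{α,β,δ} the double rotation, with α, β irrational, 0 < β < min(δ, 1 − δ), and δ ∈ (0,1). Then for every nonempty open arc A ⊆ S there exists a finite itinerary J = (j_1, …, j_k) ∈ {1,2}^k such that T_J(S) := (T_{j_1} ∘ … ∘ T_{j_k})(S) ⊆ A. -/
open MeasureTheory Topology Filter Set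

/-- The rigid rotation `T₁(y) = y + α (mod 1)` of the circle `S = ℝ/ℤ`. -/
noncomputable def rigidRot (a : ℝ) : AddCircle (1 : ℝ) → AddCircle (1 : ℝ) :=
  fun y => y + (a : AddCircle (1 : ℝ))

/-- The double rotation `T_{α,β,δ}` of the circle `S = ℝ/ℤ`:
`x ↦ x + α + β (mod 1)` if `x ≤ δ` and `x ↦ x + α (mod 1)` if `x > δ`,
where `x` is identified with its representative in `[0,1)`. -/
noncomputable def doubleRot (a b dl : ℝ) : AddCircle (1 : ℝ) → AddCircle (1 : ℝ) :=
  fun x =>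
    if ((AddCircle.equivIco 1 0 x : ℝ)) ≤ dl then x + ((a + b : ℝ) : AddCircle (1 : ℝ))
    else x + (a : AddCircle (1 : ℝ))

/-- `T_J = T_{j_1} ∘ … ∘ T_{j_k}` for a finite itinerary `J = (j_1, …, j_k)` in `{1,2}^k`;
here the letter `true` stands for the rigid rotation `T₁` and `false` for the double
rotation `T₂ = T_{α,β,δ}`. -/
noncomputable def applyWord (a b dl : ℝ) : List Bool → AddCircle (1 : ℝ) → AddCircle (1 : ℝ)
  | [] => id
  | j :: J => (cond j (rigidRot a) (doubleRot a b dl)) ∘ applyWord a b dl J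

/-!
Call a set attainable if it contains `T_J(S)` for some word `J`. Attainable sets are stable under
enlargement and under `T₁` and `T₂`, and since `α` is irrational an attainable arc can be
rotated so that it starts in any prescribed open interval. It therefore suffices to find
attainable arcs of arbitrarily small length.

Applied to an arc that straddles `δ` (or `0`), `T₂` cuts it into two pieces and shifts the piece
in `[0, δ]` by `β` relative to the other one; repeating this on the two pieces moves their
relative offset along the orbit `(k + 1)β mod 1`. Stop at the first orbit point below the length
`L` of the arc (cut at `δ`), or above `1 - L` (cut at `0`), let `y` be the resulting gap, and take
the hull: with the cut chosen in `(y/2, L - y/2)` this is an arc of length at most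
`max y (L - y/2)`. Iterating such rounds, the attainable lengths run through the record minima of
`(k + 1)β mod 1`, which tend to `0`. Cuts at `δ` alone stall at a record, which is its own first
orbit point below it; a round with a cut at `0` gets strictly below, as
`(j + 1)β + (k + 1)β ∉ ℤ`.
-/

theorem Irrational.exists_nat_mul_add_intCast_mem_Ioo {θ lo hi : ℝ} (hθ : Irrational θ)
    (hlh : lo < hi) :
    ∃ (n : ℕ) (m : ℤ), n * θ + m ∈ Ioo lo hi := by
  have hdense : DenseRange (fun n : ℕ => n • (θ : AddCircle (1 : ℝ))) :=
    denseRange_zsmul_iff_nsmul.1 (AddCircle.denseRange_zsmul_coe_iff.2 (by simpa using hθ))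
  obtain ⟨n, x, hx, hxn⟩ := hdense.exists_mem_open
    (QuotientAddGroup.isOpenMap_coe _ isOpen_Ioo) ((nonempty_Ioo.2 hlh).image _)
  rw [← AddCircle.coe_nsmul, QuotientAddGroup.eq, AddSubgroup.mem_zmultiples_iff] at hxn
  obtain ⟨m, hm⟩ := hxn
  refine ⟨n, -m, ?_⟩
  rw [zsmul_one, nsmul_eq_mul] at hm
  rwa [Int.cast_neg, hm, neg_add, neg_neg, add_comm x, add_neg_cancel_left]

theorem Monotone.of_step_down {P : ℝ → Prop} (hP : Monotone P) {y c L₀ : ℝ} (hc : 0 < c)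
    (hstep : ∀ L, y < L → L ≤ L₀ → P L → P (max y (L - c))) (h : P L₀) : P y := by
  suffices ∀ n : ℕ, ∀ L ≤ L₀, L ≤ y + n * c → P L → P y by
    obtain ⟨n, hn⟩ := exists_nat_ge ((L₀ - y) / c)
    exact this n L₀ le_rfl (by rw [div_le_iff₀ hc] at hn; linarith) h
  intro n
  induction n with
  | zero => exact fun L _ hL hPL => hP (by simpa using hL) hPL
  | succ n ih =>
    intro L hL₀ hL hPL
    rcases le_or_gt L y with hLy | hyL
    · exact hP hLy hPL
    · have hnc : 0 ≤ n * c := by positivity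
      push_cast at hL
      exact ih _ (max_le (by linarith) (by linarith)) (max_le (by linarith) (by linarith))
        (hstep L hyL hL₀ hPL)

namespace DoubleRotation

variable {a b dl : ℝ}

def Attainable (a b dl : ℝ) (A : Set (AddCircle (1 : ℝ))) : Prop :=
  ∃ J : List Bool, range (applyWord a b dl J) ⊆ A

theorem attainable_univ : Attainable a b dl univ := ⟨[], subset_univ _⟩

theorem Attainable.mono {A B : Set (AddCircle (1 : ℝ))} (h : Attainable a b dl A)
    (hAB : A ⊆ B) : Attainable a b dl B :=
  let ⟨J, hJ⟩ := h; ⟨J, hJ.trans hAB⟩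

theorem Attainable.image_rigidRot {A : Set (AddCircle (1 : ℝ))} (h : Attainable a b dl A) :
    Attainable a b dl (rigidRot a '' A) :=
  let ⟨J, hJ⟩ := h
  ⟨true :: J, by rw [applyWord, cond_true, range_comp]; exact image_mono hJ⟩

theorem Attainable.image_doubleRot {A : Set (AddCircle (1 : ℝ))} (h : Attainable a b dl A) :
    Attainable a b dl (doubleRot a b dl '' A) :=
  let ⟨J, hJ⟩ := h
  ⟨false :: J, by rw [applyWord, cond_false, range_comp]; exact image_mono hJ⟩

theorem Attainable.image_add_nsmul {A : Set (AddCircle (1 : ℝ))} (h : Attainable a b dl A)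
    (n : ℕ) : Attainable a b dl ((· + n • (a : AddCircle (1 : ℝ))) '' A) := by
  induction n with
  | zero => simpa using h
  | succ n ih =>
    convert ih.image_rigidRot using 1
    simp only [rigidRot, image_image, succ_nsmul, add_assoc]

theorem Attainable.exists_image_add_mem_Ioo (ha : Irrational a) {A : Set (AddCircle (1 : ℝ))}
    (h : Attainable a b dl A) {lo hi : ℝ} (hlh : lo < hi) :
    ∃ r ∈ Ioo lo hi, Attainable a b dl ((· + (r : AddCircle (1 : ℝ))) '' A) := by
  obtain ⟨n, m, hnm⟩ := ha.exists_nat_mul_add_intCast_mem_Ioo hlh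
  refine ⟨_, hnm, ?_⟩
  convert h.image_add_nsmul n using 4
  rw [AddCircle.coe_add, ← nsmul_eq_mul, AddCircle.coe_nsmul, add_eq_left]
  exact (AddCircle.coe_eq_zero_iff 1).2 ⟨m, by simp⟩

theorem image_add_image_coe (s : Set ℝ) (r : ℝ) :
    (· + (r : AddCircle (1 : ℝ))) '' ((↑) '' s) = (↑) '' ((· + r) '' s) := by
  simp only [image_image, AddCircle.coe_add]

theorem doubleRot_coe_of_le {x : ℝ} (hx : x ∈ Ico 0 1) (h : x ≤ dl) :
    doubleRot a b dl x = ↑(x + (a + b)) := by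
  rw [doubleRot, AddCircle.equivIco_coe_eq (by simpa using hx), if_pos h]
  exact (AddCircle.coe_add _ _ _).symm

theorem doubleRot_coe_of_lt {x : ℝ} (hx : x ∈ Ico 0 1) (h : dl < x) :
    doubleRot a b dl x = ↑(x + a) := by
  rw [doubleRot, AddCircle.equivIco_coe_eq (by simpa using hx), if_neg h.not_ge]
  exact (AddCircle.coe_add _ _ _).symm

theorem image_doubleRot_coe_of_subset_Iic {s : Set ℝ} (hs : s ⊆ Ico 0 1 ∩ Iic dl) :
    doubleRot a b dl '' ((↑) '' s) = (↑) '' ((· + (a + b)) '' s) := by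
  rw [image_image, image_image]
  exact image_congr fun x hx => doubleRot_coe_of_le (hs hx).1 (hs hx).2

theorem image_doubleRot_coe_of_subset_Ioi {s : Set ℝ} (hs : s ⊆ Ico 0 1 ∩ Ioi dl) :
    doubleRot a b dl '' ((↑) '' s) = (↑) '' ((· + a) '' s) := by
  rw [image_image, image_image]
  exact image_congr fun x hx => doubleRot_coe_of_lt (hs hx).1 (hs hx).2

def arc (c L : ℝ) : Set (AddCircle (1 : ℝ)) := (↑) '' Icc c (c + L)

theorem image_add_arc (c L r : ℝ) :
    (· + (r : AddCircle (1 : ℝ))) '' arc c L = arc (c + r) L := by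
  rw [arc, image_add_image_coe, image_add_const_Icc, arc, add_right_comm]

theorem arc_add_intCast (c L : ℝ) (m : ℤ) : arc (c + m) L = arc c L := by
  rw [← image_add_arc, (AddCircle.coe_eq_zero_iff 1).2 ⟨m, by simp⟩]
  simp

theorem image_doubleRot_arc_of_le {c L : ℝ} (h₀ : 0 ≤ c) (h₁ : c + L ≤ dl)
    (hdl : dl < 1) :
    doubleRot a b dl '' arc c L = arc (c + (a + b)) L := by
  rw [arc, image_doubleRot_coe_of_subset_Iic, image_add_const_Icc, arc, add_right_comm]
  exact fun x ⟨hx₁, hx₂⟩ => ⟨⟨by linarith, by linarith⟩, show x ≤ dl by linarith⟩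

theorem image_doubleRot_arc_of_lt {c L : ℝ} (h₀ : dl < c) (h₁ : c + L < 1) (hdl : 0 ≤ dl) :
    doubleRot a b dl '' arc c L = arc (c + a) L := by
  rw [arc, image_doubleRot_coe_of_subset_Ioi, image_add_const_Icc, arc, add_right_comm]
  exact fun x ⟨hx₁, hx₂⟩ => ⟨⟨by linarith, by linarith⟩, show dl < x by linarith⟩

def IntervalAttainable (a b dl L : ℝ) : Prop :=
  ∃ c, Attainable a b dl (arc c L)

def PairAttainable (a b dl p d q : ℝ) : Prop :=
  ∃ c, Attainable a b dl (arc c p ∪ arc (c + d) q)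

theorem intervalAttainable_monotone : Monotone (IntervalAttainable a b dl) :=
  fun _ _ hLL' ⟨c, hc⟩ => ⟨c, hc.mono (image_mono (Icc_subset_Icc le_rfl (by linarith)))⟩

theorem IntervalAttainable.exists_arc (ha : Irrational a) {L : ℝ}
    (h : IntervalAttainable a b dl L) {lo hi : ℝ} (hlh : lo < hi) :
    ∃ t ∈ Ioo lo hi, Attainable a b dl (arc t L) := by
  obtain ⟨c, hc⟩ := h
  obtain ⟨r, ⟨hr₁, hr₂⟩, hcr⟩ := hc.exists_image_add_mem_Ioo ha (sub_lt_sub_right hlh c)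
  rw [image_add_arc] at hcr
  exact ⟨c + r, ⟨by linarith, by linarith⟩, hcr⟩

theorem PairAttainable.exists_pair (ha : Irrational a) {p d q : ℝ}
    (h : PairAttainable a b dl p d q) {lo hi : ℝ} (hlh : lo < hi) :
    ∃ w ∈ Ioo lo hi, Attainable a b dl (arc w p ∪ arc (w + d) q) := by
  obtain ⟨c, hc⟩ := h
  obtain ⟨r, ⟨hr₁, hr₂⟩, hcr⟩ := hc.exists_image_add_mem_Ioo ha (sub_lt_sub_right hlh c)
  rw [image_union, image_add_arc, image_add_arc, add_right_comm c d] at hcr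
  exact ⟨c + r, ⟨by linarith, by linarith⟩, hcr⟩

theorem PairAttainable.add_intCast {p d q : ℝ} (h : PairAttainable a b dl p d q) (m : ℤ) :
    PairAttainable a b dl p (d + m) q :=
  let ⟨c, hc⟩ := h; ⟨c, by rwa [← add_assoc, arc_add_intCast]⟩

theorem PairAttainable.hull {p d q : ℝ} (h : PairAttainable a b dl p d q) :
    IntervalAttainable a b dl (max p (d + q) - min d 0) := by
  obtain ⟨c, hc⟩ := h
  refine ⟨c + min d 0, hc.mono (union_subset ?_ ?_)⟩ <;>
  refine image_mono (Icc_subset_Icc ?_ ?_) <;>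
  linarith [min_le_left d 0, min_le_right d 0, le_max_left p (d + q), le_max_right p (d + q)]

theorem intervalAttainable_one_sub (hb0 : 0 < b) (hbd : b < dl) (hbd' : b < 1 - dl) :
    IntervalAttainable a b dl (1 - b) := by
  have hcover : (univ : Set (AddCircle (1 : ℝ))) = (↑) '' Icc 0 dl ∪ (↑) '' Ioo dl 1 := by
    rw [← image_union, Icc_union_Ioo_eq_Ico (by linarith) (by linarith),
      ← AddCircle.coe_image_Ico_eq 1 0, zero_add]
  have h := (attainable_univ (a := a) (b := b) (dl := dl)).image_doubleRot
  rw [hcover, image_union, image_doubleRot_coe_of_subset_Iic, image_doubleRot_coe_of_subset_Ioi,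
    image_add_const_Icc, image_add_const_Ioo] at h
  · refine ⟨a + b, h.mono (union_subset (image_mono ?_) (image_mono ?_))⟩
    · exact Icc_subset_Icc (by linarith) (by linarith)
    · exact Ioo_subset_Icc_self.trans (Icc_subset_Icc (by linarith) (by linarith))
  · exact fun x ⟨h₁, h₂⟩ => ⟨⟨by linarith, by linarith⟩, show dl < x from h₁⟩
  · exact fun x ⟨h₁, h₂⟩ => ⟨⟨h₁, by linarith⟩, show x ≤ dl from h₂⟩

theorem IntervalAttainable.exists_split_at_dl (ha : Irrational a) {L σ₁ σ₂ : ℝ}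
    (h : IntervalAttainable a b dl L) (h₀ : 0 ≤ σ₁) (hL₁ : L - 1 + dl ≤ σ₁)
    (hσ : σ₁ < σ₂) (hdl : σ₂ ≤ dl) (hL : σ₂ ≤ L) :
    ∃ s ∈ Ioo σ₁ σ₂, PairAttainable a b dl (L - s) (b - s) s := by
  obtain ⟨t, ⟨ht₁, ht₂⟩, hat⟩ := h.exists_arc ha (sub_lt_sub_left hσ dl)
  refine ⟨dl - t, ⟨by linarith, by linarith⟩, dl + a, ?_⟩
  rw [arc, ← Icc_union_Ioc_eq_Icc (show t ≤ dl by linarith) (show dl ≤ t + L by linarith),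
    image_union] at hat
  have h₂ := hat.image_doubleRot
  rw [image_union, image_doubleRot_coe_of_subset_Iic, image_doubleRot_coe_of_subset_Ioi,
    image_add_const_Icc, image_add_const_Ioc, union_comm] at h₂
  · refine h₂.mono (union_subset_union (image_mono ?_) (image_mono ?_))
    · exact Ioc_subset_Icc_self.trans (Icc_subset_Icc le_rfl (by linarith))
    · exact Icc_subset_Icc (by linarith) (by linarith)
  · exact fun x ⟨h₁, h₂⟩ => ⟨⟨by linarith, by linarith⟩, show dl < x from h₁⟩
  · exact fun x ⟨h₁, h₂⟩ => ⟨⟨by linarith, by linarith⟩, show x ≤ dl from h₂⟩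

theorem IntervalAttainable.exists_split_at_zero (ha : Irrational a) {L σ₁ σ₂ : ℝ}
    (h : IntervalAttainable a b dl L) (h₀ : 0 ≤ σ₁) (hL₁ : L - 1 + dl ≤ σ₁)
    (hσ : σ₁ < σ₂) (hdl : σ₂ ≤ dl) (hL : σ₂ ≤ L) :
    ∃ p ∈ Ioo σ₁ σ₂, PairAttainable a b dl (L - p) (L - p + b) p := by
  obtain ⟨t, ⟨ht₁, ht₂⟩, hat⟩ := h.exists_arc ha (add_lt_add_left hσ (1 - L))
  set p := t + L - 1 with hp
  have hwrap : arc t L = (↑) '' Ico t 1 ∪ arc 0 p := by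
    rw [arc, ← Ico_union_Icc_eq_Icc (show t ≤ 1 by linarith) (show 1 ≤ t + L by linarith),
      image_union, ← arc_add_intCast 0 p 1]
    simp [arc, hp]
  rw [hwrap] at hat
  have h₂ := hat.image_doubleRot
  rw [image_union, image_doubleRot_coe_of_subset_Ioi, image_add_const_Ico,
    image_doubleRot_arc_of_le le_rfl (by linarith) (by linarith)] at h₂
  · refine ⟨p, ⟨by linarith, by linarith⟩, ?_⟩
    convert (show PairAttainable a b dl (L - p) (b - t) p from
      ⟨t + a, h₂.mono (union_subset_union (image_mono ?_) ?_)⟩).add_intCast 1 using 1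
    · push_cast; ring
    · exact Ico_subset_Icc_self.trans (Icc_subset_Icc le_rfl (by linarith))
    · rw [show t + a + (b - t) = 0 + (a + b) by ring]
  · exact fun x ⟨h₁, h₂⟩ => ⟨⟨by linarith, h₂⟩, show dl < x by linarith⟩

theorem PairAttainable.offset_add (ha : Irrational a) {p d q : ℝ}
    (h : PairAttainable a b dl p d q) (hp₀ : 0 ≤ p) (hq₀ : 0 ≤ q) (hp : p < 1 - dl)
    (hq : q < dl) (hpd : p < d) (hdq : d + q < 1) :
    PairAttainable a b dl p (d + b) q := by
  obtain ⟨w, ⟨hw₁, hw₂⟩, hw⟩ := h.exists_pair ha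
    (lo := max dl (1 - d)) (hi := min (1 - p) (1 + dl - d - q))
    (max_lt (lt_min (by linarith) (by linarith)) (lt_min (by linarith) (by linarith)))
  rw [max_lt_iff] at hw₁
  rw [lt_min_iff] at hw₂
  rw [show arc (w + d) q = arc (w + d - 1) q by simpa using arc_add_intCast (w + d - 1) q 1] at hw
  have h₂ := hw.image_doubleRot
  rw [image_union, image_doubleRot_arc_of_lt hw₁.1 (by linarith) (by linarith),
    image_doubleRot_arc_of_le (by linarith) (by linarith) (by linarith)] at h₂
  convert (show PairAttainable a b dl p (d + b - 1) q from ⟨w + a, by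
    rwa [show w + a + (d + b - 1) = w + d - 1 + (a + b) by ring]⟩).add_intCast 1 using 1
  push_cast; ring

noncomputable def rotOrbit (b : ℝ) (k : ℕ) : ℝ := Int.fract ((k + 1) * b)

theorem rotOrbit_zero (h₀ : 0 ≤ b) (h₁ : b < 1) : rotOrbit b 0 = b := by
  simpa [rotOrbit] using Int.fract_eq_self.2 ⟨h₀, h₁⟩

theorem rotOrbit_nonneg (b : ℝ) (k : ℕ) : 0 ≤ rotOrbit b k := Int.fract_nonneg _

theorem rotOrbit_lt_one (b : ℝ) (k : ℕ) : rotOrbit b k < 1 := Int.fract_lt_one _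

theorem rotOrbit_pos (hb : Irrational b) (k : ℕ) : 0 < rotOrbit b k :=
  Int.fract_pos.2 <| by simpa using (hb.natCast_mul (Nat.succ_ne_zero k)).ne_int _

theorem exists_rotOrbit_eq (b : ℝ) (k : ℕ) : ∃ m : ℤ, rotOrbit b k = (k + 1) * b + m :=
  ⟨-⌊((k : ℝ) + 1) * b⌋, by rw [rotOrbit, Int.fract, Int.cast_neg, sub_eq_add_neg]⟩

theorem rotOrbit_add_rotOrbit_ne_one (hb : Irrational b) (j k : ℕ) :
    rotOrbit b j + rotOrbit b k ≠ 1 := by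
  intro h
  apply (hb.natCast_mul (show j + k + 2 ≠ 0 by omega)).ne_int
    (1 + ⌊((j : ℝ) + 1) * b⌋ + ⌊((k : ℝ) + 1) * b⌋)
  simp only [rotOrbit, Int.fract] at h
  push_cast
  linarith

theorem exists_rotOrbit_mem_Ioo (hb : Irrational b) {u w : ℝ} (hu : 0 ≤ u) (huw : u < w)
    (hw : w ≤ 1) : ∃ k, rotOrbit b k ∈ Ioo u w := by
  obtain ⟨n, m, h₁, h₂⟩ := hb.exists_nat_mul_add_intCast_mem_Ioo (sub_lt_sub_right huw b)
  have : rotOrbit b n = (n + 1) * b + m :=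
    Int.fract_eq_iff.2 ⟨by linarith, by linarith, -m, by push_cast; ring⟩
  exact ⟨n, by rw [this]; constructor <;> linarith⟩

theorem PairAttainable.walk (ha : Irrational a) {p q d₀ : ℝ} {K : ℕ}
    (h : PairAttainable a b dl p (d₀ + b) q) (hp₀ : 0 ≤ p) (hq₀ : 0 ≤ q) (hp : p < 1 - dl)
    (hq : q < dl) (hK : ∀ k < K, p < d₀ + rotOrbit b k ∧ d₀ + rotOrbit b k + q < 1) :
    PairAttainable a b dl p (d₀ + rotOrbit b K) q := by
  induction K with
  | zero =>
    obtain ⟨m, hm⟩ := exists_rotOrbit_eq b 0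
    convert h.add_intCast m using 1
    rw [hm]; push_cast; ring
  | succ K ih =>
    obtain ⟨m, hm⟩ := exists_rotOrbit_eq b K
    obtain ⟨m', hm'⟩ := exists_rotOrbit_eq b (K + 1)
    obtain ⟨h₁, h₂⟩ := hK K (Nat.lt_succ_self K)
    have ih' := ih fun k hk => hK k (Nat.lt_succ_of_lt hk)
    convert (ih'.offset_add ha hp₀ hq₀ hp hq h₁ h₂).add_intCast (m' - m) using 1
    rw [hm, hm']; push_cast; ring

theorem IntervalAttainable.round_at_dl (ha : Irrational a) {L : ℝ} {K : ℕ}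
    (h : IntervalAttainable a b dl L) (hK : ∀ k < K, L < rotOrbit b k) (hyL : rotOrbit b K < L)
    (hL : L < 1) (hyd : rotOrbit b K < dl) (hyd' : rotOrbit b K < 1 - dl) :
    IntervalAttainable a b dl (max (rotOrbit b K) (L - rotOrbit b K / 2)) := by
  set y := rotOrbit b K
  have hy₀ : 0 ≤ y := rotOrbit_nonneg b K
  obtain ⟨s, ⟨hs₁, hs₂⟩, hs⟩ := h.exists_split_at_dl ha
    (σ₁ := max (y / 2) (L - 1 + dl)) (σ₂ := min (L - y / 2) dl)
    (le_max_of_le_left (by linarith)) (le_max_right _ _)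
    (max_lt (lt_min (by linarith) (by linarith)) (lt_min (by linarith) (by linarith)))
    (min_le_right _ _) ((min_le_left _ _).trans (by linarith))
  rw [max_lt_iff] at hs₁
  rw [lt_min_iff] at hs₂
  have hwalk := (show PairAttainable a b dl (L - s) (-s + b) s by rwa [neg_add_eq_sub]).walk ha
    (by linarith) (by linarith) (by linarith) hs₂.2 (K := K)
    fun k hk => ⟨by linarith [hK k hk], by linarith [rotOrbit_lt_one b k]⟩
  refine intervalAttainable_monotone ?_ hwalk.hull
  simp only [max_def, min_def]
  split_ifs <;> linarith

theorem IntervalAttainable.round_at_zero (ha : Irrational a) (hb : Irrational b) {L : ℝ} {K : ℕ}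
    (h : IntervalAttainable a b dl L) (hK : ∀ k < K, rotOrbit b k < 1 - L)
    (hyL : 1 - rotOrbit b K < L) (hL : L < 1) (hyd : 1 - rotOrbit b K < dl)
    (hyd' : 1 - rotOrbit b K < 1 - dl) :
    IntervalAttainable a b dl (max (1 - rotOrbit b K) (L - (1 - rotOrbit b K) / 2)) := by
  set y := 1 - rotOrbit b K with hy
  have hy₀ : 0 ≤ y := by linarith [rotOrbit_lt_one b K]
  obtain ⟨p, ⟨hp₁, hp₂⟩, hp⟩ := h.exists_split_at_zero ha
    (σ₁ := max (y / 2) (L - 1 + dl)) (σ₂ := min (L - y / 2) dl)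
    (le_max_of_le_left (by linarith)) (le_max_right _ _)
    (max_lt (lt_min (by linarith) (by linarith)) (lt_min (by linarith) (by linarith)))
    (min_le_right _ _) ((min_le_left _ _).trans (by linarith))
  rw [max_lt_iff] at hp₁
  rw [lt_min_iff] at hp₂
  have hwalk := (hp.walk ha (by linarith) (by linarith) (by linarith) hp₂.2 (K := K)
    fun k hk => ⟨by linarith [rotOrbit_pos hb k], by linarith [hK k hk]⟩).add_intCast (-1)
  refine intervalAttainable_monotone ?_ hwalk.hull
  push_cast
  simp only [max_def, min_def]
  split_ifs <;> linarith

theorem IntervalAttainable.shrink_at_dl (ha : Irrational a) (hb : Irrational b) {L₀ : ℝ}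
    {K : ℕ} (h : IntervalAttainable a b dl L₀) (hK : ∀ k < K, L₀ < rotOrbit b k)
    (hL₀ : L₀ < 1)
    (hyd : rotOrbit b K < dl) (hyd' : rotOrbit b K < 1 - dl) :
    IntervalAttainable a b dl (rotOrbit b K) :=
  intervalAttainable_monotone.of_step_down (half_pos (rotOrbit_pos hb K))
    (fun _ hyL hLL₀ hL => hL.round_at_dl ha (fun k hk => hLL₀.trans_lt (hK k hk)) hyL
      (hLL₀.trans_lt hL₀) hyd hyd') h

theorem IntervalAttainable.shrink_at_zero (ha : Irrational a) (hb : Irrational b) {L₀ : ℝ}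
    {K : ℕ} (h : IntervalAttainable a b dl L₀) (hK : ∀ k < K, rotOrbit b k < 1 - L₀)
    (hL₀ : L₀ < 1) (hyd : 1 - rotOrbit b K < dl) (hyd' : 1 - rotOrbit b K < 1 - dl) :
    IntervalAttainable a b dl (1 - rotOrbit b K) :=
  intervalAttainable_monotone.of_step_down (half_pos (by linarith [rotOrbit_lt_one b K]))
    (fun _ hyL hLL₀ hL => hL.round_at_zero ha hb (fun k hk => (hK k hk).trans_le (by linarith))
      hyL (hLL₀.trans_lt hL₀) hyd hyd') h

theorem IntervalAttainable.exists_lt_rotOrbit (ha : Irrational a) (hb : Irrational b) {j : ℕ}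
    (h : IntervalAttainable a b dl (rotOrbit b j)) (hd : rotOrbit b j < dl)
    (hd' : rotOrbit b j < 1 - dl) :
    ∃ L, 0 < L ∧ L < rotOrbit b j ∧ IntervalAttainable a b dl L := by
  classical
  have hex : ∃ k, 1 - rotOrbit b j ≤ rotOrbit b k :=
    let ⟨k, hk, _⟩ := exists_rotOrbit_mem_Ioo hb (by linarith [rotOrbit_lt_one b j])
      (sub_lt_self 1 (rotOrbit_pos hb j)) le_rfl
    ⟨k, hk.le⟩
  have hKlt : 1 - rotOrbit b j < rotOrbit b (Nat.find hex) :=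
    (Nat.find_spec hex).lt_of_ne fun h => rotOrbit_add_rotOrbit_ne_one hb j _ (by linarith)
  refine ⟨_, by linarith [rotOrbit_lt_one b (Nat.find hex)], by linarith,
    h.shrink_at_zero ha hb (fun k hk => lt_of_not_ge (Nat.find_min hex hk))
      (rotOrbit_lt_one b j) (by linarith) (by linarith)⟩

theorem IntervalAttainable.exists_first_rotOrbit_le (ha : Irrational a) (hb : Irrational b)
    {L : ℝ} (h : IntervalAttainable a b dl L) (hL₀ : 0 < L) (hd : L < dl) (hd' : L < 1 - dl) :
    ∃ K, (∀ k < K, L < rotOrbit b k) ∧ rotOrbit b K ≤ L ∧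
      IntervalAttainable a b dl (rotOrbit b K) := by
  classical
  have hex : ∃ k, rotOrbit b k ≤ L :=
    let ⟨k, _, hk⟩ := exists_rotOrbit_mem_Ioo hb le_rfl hL₀ (by linarith)
    ⟨k, hk.le⟩
  have hK : ∀ k < Nat.find hex, L < rotOrbit b k := fun k hk => lt_of_not_ge (Nat.find_min hex hk)
  exact ⟨_, hK, Nat.find_spec hex, h.shrink_at_dl ha hb hK (by linarith)
    ((Nat.find_spec hex).trans_lt hd) ((Nat.find_spec hex).trans_lt hd')⟩

theorem exists_record_intervalAttainable (ha : Irrational a) (hb : Irrational b) (hb₀ : 0 < b)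
    (hbd : b < dl) (hbd' : b < 1 - dl) (n : ℕ) :
    ∃ j, (∀ k ≤ n, rotOrbit b j ≤ rotOrbit b k) ∧
      IntervalAttainable a b dl (rotOrbit b j) := by
  have hb₁ : b < 1 := by linarith
  induction n with
  | zero =>
    refine ⟨0, fun k hk => by rw [Nat.le_zero.1 hk], ?_⟩
    refine (intervalAttainable_one_sub hb₀ hbd hbd').shrink_at_dl ha hb (K := 0)
      (fun k hk => absurd hk (Nat.not_lt_zero k)) (by linarith) ?_ ?_ <;>
    rwa [rotOrbit_zero hb₀.le hb₁]
  | succ n ih =>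
    obtain ⟨j, hj, hjA⟩ := ih
    have hjb : rotOrbit b j ≤ b := (hj 0 n.zero_le).trans_eq (rotOrbit_zero hb₀.le hb₁)
    obtain ⟨L, hL₀, hLj, hL⟩ := hjA.exists_lt_rotOrbit ha hb (by linarith) (by linarith)
    obtain ⟨K, hK, hKL, hKA⟩ :=
      hL.exists_first_rotOrbit_le ha hb hL₀ (by linarith) (by linarith)
    have hnK : n < K := lt_of_not_ge fun hKn => by linarith [hj K hKn]
    refine ⟨K, fun k hk => ?_, hKA⟩
    rcases lt_or_ge k K with hkK | hKk
    · exact hKL.trans (hK k hkK).le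
    · rw [le_antisymm hKk (by omega)]

theorem exists_intervalAttainable_le (ha : Irrational a) (hb : Irrational b) (hb₀ : 0 < b)
    (hbd : b < dl) (hbd' : b < 1 - dl) {ε : ℝ} (hε : 0 < ε) :
    ∃ L, 0 < L ∧ L ≤ ε ∧ IntervalAttainable a b dl L := by
  obtain ⟨n, -, hn⟩ :=
    exists_rotOrbit_mem_Ioo hb le_rfl (lt_min hε one_pos) (min_le_right ε 1)
  obtain ⟨j, hj, hjA⟩ := exists_record_intervalAttainable ha hb hb₀ hbd hbd' n
  exact ⟨_, rotOrbit_pos hb j, (hj n le_rfl).trans (hn.le.trans (min_le_left ε 1)), hjA⟩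

end DoubleRotation

theorem circle_word_into_arc_general (a b dl : ℝ) (ha : Irrational a)
    (hb : Irrational b) (hb0 : 0 < b) (hb1 : b < min dl (1 - dl)) :
    ∀ A : Set (AddCircle (1 : ℝ)), IsOpen A → IsConnected A →
      ∃ J : List Bool, Set.range (applyWord a b dl J) ⊆ A := by
  intro A hA hA'
  obtain ⟨x, hx⟩ := hA'.nonempty
  obtain ⟨z, rfl⟩ := QuotientAddGroup.mk_surjective x
  obtain ⟨η, hη, hball⟩ := Metric.isOpen_iff.1 (hA.preimage (AddCircle.continuous_mk' 1)) z hx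
  obtain ⟨L, hL₀, hLη, hL⟩ := DoubleRotation.exists_intervalAttainable_le ha hb hb0
    (lt_min_iff.1 hb1).1 (lt_min_iff.1 hb1).2 hη
  obtain ⟨t, ⟨ht₁, ht₂⟩, J, hJ⟩ :=
    hL.exists_arc ha (show z - η < z + η - L by linarith)
  refine ⟨J, hJ.trans ?_⟩
  rintro _ ⟨y, ⟨hy₁, hy₂⟩, rfl⟩
  exact hball (by rw [Real.ball_eq_Ioo]; exact ⟨by linarith, by linarith⟩)

/-- For the rigid rotation `T₁(y) = y + α` and the double rotation
`T₂ = T_{α,β,δ}` with `α, β` irrational, `0 < β < min(δ, 1-δ)`, `δ ∈ (0,1)`: for every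
nonempty open arc `A ⊆ S` there is a finite itinerary `J` with `T_J(S) ⊆ A`. -/
theorem circle_word_into_arc (a b dl : ℝ) (ha : Irrational a) (ha0 : 0 < a) (ha1 : a < 1)
    (hb : Irrational b) (hb0 : 0 < b) (hb1 : b < min dl (1 - dl))
    (hd0 : 0 < dl) (hd1 : dl < 1) :
    ∀ A : Set (AddCircle (1 : ℝ)), IsOpen A → IsConnected A →
      ∃ J : List Bool, Set.range (applyWord a b dl J) ⊆ A :=
  circle_word_into_arc_general a b dl ha hb hb0 hb1
end
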